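/- Let S be a nonempty finite index set of cardinality n, and for each i in S let Y_it, Y_ic be real numbers and p_i ∈ (0,1). Define μ_t, μ_c, p_t, p_c, s_t, s_c, ρ_t, ρ_c as usual: μ_t = (1/n)·Σ Y_it, μ_c = (1/n)·Σ Y_ic, p_t = (1/n)·Σ p_i, p_c = 1 − p_t, s_t = (1/n)·Σ Y_it·p_i − μ_t·p_t, s_c = (1/n)·Σ Y_ic·(1 − p_i) − μ_c·p_c, ρ_t = μ_t + s_t/p_t, ρ_c = μ_c + s_c/p_c. Define the delta-method mean E_δ(τ̂) := (ρ_t − Cov(y_t − ρ_t·x_t, x_t)/(n·p_t)²) − (ρ_c − Cov(y_c − ρ_c·x_c, x_c)/(n·p_c)²), where x_t = Σ W_i, y_t = Σ W_i·Y_it, x_c = Σ (1 − W_i), y_c = Σ (1 − W_i)·Y_ic and (W_i)_{i∈S} are independent Bernoulli with P(W_i = 1) = p_i. Then E_δ(τ̂) = (μ_t − μ_c) + (s_t/p_t − s_c/p_c) + (1/(n²·p_t²))·Σ_{i∈S} p_i²·(Y_it − ρ_t) − (1/(n²·p_c²))·Σ_{i∈S} (1 − p_i)²·(Y_ic − ρ_c).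 -/

import Mathlib

/-!
For independent `{0,1}`-valued `V i` with means `q i`, the residual `y - ρ x` of `x = ∑ V i`,
`y = ∑ V i * Y i` is `∑ (Y i - ρ) * V i`, so `Cov(y - ρ x, x) = ∑ (Y i - ρ) * q i * (1 - q i)`.
Since `ρ` is the `q`-weighted mean of `Y`, the part `∑ q i * (Y i - ρ)` vanishes and
`-∑ q i ^ 2 * (Y i - ρ)` remains. The treatment arm is this with `V = W`, the control arm with
`V = 1 - W`, and `ρ = μ + s / p` gives the stated form.
-/

open MeasureTheory ProbabilityTheory

/-- Covariance of two real random variables: `E[(X - E X)(Y - E Y)]`. -/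
noncomputable def cov {Ω : Type*} [MeasurableSpace Ω] (μ : Measure Ω) (X Y : Ω → ℝ) : ℝ :=
  ∫ ω, (X ω - ∫ ω', X ω' ∂μ) * (Y ω - ∫ ω', Y ω' ∂μ) ∂μ

open Finset

section ZeroOne

variable {Ω : Type*} [MeasurableSpace Ω] {μ : Measure Ω} {V : Ω → ℝ}

lemma memLp_of_forall_eq_zero_or_eq_one [IsFiniteMeasure μ] (hV : AEStronglyMeasurable V μ)
    (h01 : ∀ ω, V ω = 0 ∨ V ω = 1) (r : ENNReal) : MemLp V r μ :=
  MemLp.of_bound hV 1 (ae_of_all _ fun ω => by rcases h01 ω with h | h <;> simp [h])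

lemma integral_eq_measureReal_of_forall_eq_zero_or_eq_one (hV : Measurable V)
    (h01 : ∀ ω, V ω = 0 ∨ V ω = 1) : μ[V] = μ.real {ω | V ω = 1} := by
  have hV_indicator : V = {ω | V ω = 1}.indicator 1 := by
    funext ω
    rcases h01 ω with h | h <;> simp [Set.indicator, h]
  conv_lhs => rw [hV_indicator]
  exact integral_indicator_one (hV (measurableSet_singleton 1))

lemma variance_of_forall_eq_zero_or_eq_one [IsProbabilityMeasure μ]
    (hV : AEStronglyMeasurable V μ) (h01 : ∀ ω, V ω = 0 ∨ V ω = 1) :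
    Var[V; μ] = μ[V] * (1 - μ[V]) := by
  have hV_sq : V ^ 2 = V := by
    funext ω
    rcases h01 ω with h | h <;> simp [h]
  rw [variance_eq_sub (memLp_of_forall_eq_zero_or_eq_one hV h01 2), hV_sq]
  ring

end ZeroOne

section Covariance

variable {Ω ι : Type*} [MeasurableSpace Ω] {μ : Measure Ω} {s : Finset ι}

lemma cov_eq_covariance (X Y : Ω → ℝ) : cov μ X Y = cov[X, Y; μ] := rfl

lemma covariance_sum_mul_sum_mul_of_pairwise_indepFun [IsFiniteMeasure μ] {X : ι → Ω → ℝ}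
    (hX : ∀ i ∈ s, MemLp (X i) 2 μ) (hindep : Set.Pairwise ↑s fun i j => X i ⟂ᵢ[μ] X j)
    (a c : ι → ℝ) :
    cov[fun ω => ∑ i ∈ s, a i * X i ω, fun ω => ∑ i ∈ s, c i * X i ω; μ]
      = ∑ i ∈ s, a i * c i * Var[X i; μ] := by
  rw [covariance_fun_sum_fun_sum' (fun i hi => (hX i hi).const_mul (a i))
    (fun i hi => (hX i hi).const_mul (c i))]
  refine sum_congr rfl fun i hi => ?_
  rw [sum_eq_single_of_mem i hi fun j hj hji => ?_]
  · rw [covariance_const_mul_left, covariance_const_mul_right,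
      covariance_self (hX i hi).aemeasurable]
    ring
  · rw [covariance_const_mul_left, covariance_const_mul_right,
      (hindep hi hj hji.symm).covariance_eq_zero (hX i hi) (hX j hj), mul_zero, mul_zero]

lemma covariance_sum_mul_sub_mul_sum_of_zero_or_one [IsProbabilityMeasure μ]
    {V : ι → Ω → ℝ} {q Y : ι → ℝ} {ρ : ℝ}
    (hV : ∀ i ∈ s, AEStronglyMeasurable (V i) μ) (h01 : ∀ i ∈ s, ∀ ω, V i ω = 0 ∨ V i ω = 1)
    (hindep : Set.Pairwise ↑s fun i j => V i ⟂ᵢ[μ] V j) (hq : ∀ i ∈ s, μ[V i] = q i)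
    (hρ : ∑ i ∈ s, q i * (Y i - ρ) = 0) :
    cov[fun ω => ∑ i ∈ s, V i ω * Y i - ρ * ∑ i ∈ s, V i ω, fun ω => ∑ i ∈ s, V i ω; μ]
      = -∑ i ∈ s, q i ^ 2 * (Y i - ρ) := by
  have hlin : (fun ω => ∑ i ∈ s, V i ω * Y i - ρ * ∑ i ∈ s, V i ω)
      = fun ω => ∑ i ∈ s, (Y i - ρ) * V i ω := by
    funext ω
    rw [mul_sum, ← sum_sub_distrib]
    exact sum_congr rfl fun i _ => by ring
  have hone : (fun ω => ∑ i ∈ s, V i ω) = fun ω => ∑ i ∈ s, 1 * V i ω := by simp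
  rw [hlin, hone, covariance_sum_mul_sum_mul_of_pairwise_indepFun
    (fun i hi => memLp_of_forall_eq_zero_or_eq_one (hV i hi) (h01 i hi) 2) hindep]
  calc ∑ i ∈ s, (Y i - ρ) * 1 * Var[V i; μ]
      = ∑ i ∈ s, (q i * (Y i - ρ) - q i ^ 2 * (Y i - ρ)) := sum_congr rfl fun i hi => by
        rw [variance_of_forall_eq_zero_or_eq_one (hV i hi) (h01 i hi), hq i hi]
        ring
    _ = -∑ i ∈ s, q i ^ 2 * (Y i - ρ) := by rw [sum_sub_distrib, hρ, zero_sub]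

end Covariance

lemma sum_mul_sub_eq_zero_of_eq_add_div {ι : Type*} {s : Finset ι} {q Y : ι → ℝ}
    {n m π t ρ : ℝ} (hn : n ≠ 0) (hπ0 : π ≠ 0) (hπ : π = (1 / n) * ∑ i ∈ s, q i)
    (ht : t = (1 / n) * (∑ i ∈ s, Y i * q i) - m * π) (hρ : ρ = m + t / π) :
    ∑ i ∈ s, q i * (Y i - ρ) = 0 := by
  have hq : ∑ i ∈ s, q i = n * π := by rw [hπ]; field_simp
  have hYq : ∑ i ∈ s, Y i * q i = n * (t + m * π) := by rw [ht]; field_simp; ring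
  simp only [mul_sub, sum_sub_distrib, ← sum_mul, hq]
  rw [sum_congr rfl fun i _ => mul_comm (q i) (Y i), hYq, hρ]
  field_simp
  ring

theorem delta_method_mean_stratum_general
    {Ω ι : Type*} [MeasurableSpace Ω] (μ : Measure Ω) [IsProbabilityMeasure μ]
    (S : Finset ι) (hS : S.Nonempty)
    (Yt Yc p : ι → ℝ) (hp : ∀ i ∈ S, p i ∈ Set.Ioo (0 : ℝ) 1)
    (W : ι → Ω → ℝ)
    (hWmeas : ∀ i, Measurable (W i))
    (hW01 : ∀ i, ∀ ω, W i ω = 0 ∨ W i ω = 1)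
    (hWp : ∀ i ∈ S, μ {ω | W i ω = 1} = ENNReal.ofReal (p i))
    (hindep : iIndepFun W μ)
    (n μt μc pt pc st sc ρt ρc : ℝ)
    (hn : n = (S.card : ℝ))
    (hpt : pt = (1 / n) * ∑ i ∈ S, p i)
    (hpc : pc = 1 - pt)
    (hst : st = (1 / n) * (∑ i ∈ S, Yt i * p i) - μt * pt)
    (hsc : sc = (1 / n) * (∑ i ∈ S, Yc i * (1 - p i)) - μc * pc)
    (hρt : ρt = μt + st / pt)
    (hρc : ρc = μc + sc / pc)
    (xt yt xc yc : Ω → ℝ)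
    (hxt : xt = fun ω => ∑ i ∈ S, W i ω)
    (hyt : yt = fun ω => ∑ i ∈ S, W i ω * Yt i)
    (hxc : xc = fun ω => ∑ i ∈ S, (1 - W i ω))
    (hyc : yc = fun ω => ∑ i ∈ S, (1 - W i ω) * Yc i) :
    (ρt - cov μ (fun ω => yt ω - ρt * xt ω) xt / (n * pt) ^ 2)
      - (ρc - cov μ (fun ω => yc ω - ρc * xc ω) xc / (n * pc) ^ 2)
      = (μt - μc) + (st / pt - sc / pc)
        + (1 / (n ^ 2 * pt ^ 2)) * ∑ i ∈ S, (p i) ^ 2 * (Yt i - ρt)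
        - (1 / (n ^ 2 * pc ^ 2)) * ∑ i ∈ S, (1 - p i) ^ 2 * (Yc i - ρc) := by
  have hn0 : 0 < n := hn ▸ Nat.cast_pos.mpr hS.card_pos
  have hpc' : pc = (1 / n) * ∑ i ∈ S, (1 - p i) := by
    rw [hpc, hpt, sum_sub_distrib, sum_const, nsmul_one, ← hn]
    field_simp
  have hpt0 : 0 < pt := hpt ▸ mul_pos (one_div_pos.mpr hn0) (sum_pos (fun i hi => (hp i hi).1) hS)
  have hpc0 : 0 < pc :=
    hpc' ▸ mul_pos (one_div_pos.mpr hn0) (sum_pos (fun i hi => sub_pos.mpr (hp i hi).2) hS)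
  have hmean_t : ∀ i ∈ S, μ[W i] = p i := fun i hi => by
    rw [integral_eq_measureReal_of_forall_eq_zero_or_eq_one (hWmeas i) (hW01 i), measureReal_def,
      hWp i hi, ENNReal.toReal_ofReal (hp i hi).1.le]
  have hmean_c : ∀ i ∈ S, μ[fun ω => 1 - W i ω] = 1 - p i := fun i hi => by
    rw [integral_sub (integrable_const 1) (memLp_one_iff_integrable.mp
      (memLp_of_forall_eq_zero_or_eq_one (hWmeas i).aestronglyMeasurable (hW01 i) 1)),
      integral_const, hmean_t i hi, probReal_univ, one_smul]
  have hcov_t : cov μ (fun ω => yt ω - ρt * xt ω) xt = -∑ i ∈ S, p i ^ 2 * (Yt i - ρt) := by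
    subst hyt hxt
    rw [cov_eq_covariance]
    exact covariance_sum_mul_sub_mul_sum_of_zero_or_one
      (fun i _ => (hWmeas i).aestronglyMeasurable) (fun i _ => hW01 i)
      (fun i _ j _ hij => hindep.indepFun hij) hmean_t
      (sum_mul_sub_eq_zero_of_eq_add_div hn0.ne' hpt0.ne' hpt hst hρt)
  have hcov_c : cov μ (fun ω => yc ω - ρc * xc ω) xc
      = -∑ i ∈ S, (1 - p i) ^ 2 * (Yc i - ρc) := by
    subst hyc hxc
    rw [cov_eq_covariance]
    exact covariance_sum_mul_sub_mul_sum_of_zero_or_one (V := fun i ω => 1 - W i ω)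
      (fun i _ => (measurable_const.sub (hWmeas i)).aestronglyMeasurable)
      (fun i _ ω => (hW01 i ω).symm.imp (fun h => by rw [h, sub_self]) (fun h => by rw [h, sub_zero]))
      (fun i _ j _ hij => (hindep.comp (fun _ x => 1 - x)
        (fun _ => measurable_const.sub measurable_id)).indepFun hij) hmean_c
      (sum_mul_sub_eq_zero_of_eq_add_div hn0.ne' hpc0.ne' hpc' hsc hρc)
  rw [hcov_t, hcov_c]
  linear_combination hρt - hρc

/-- Theorem 1 (delta-method mean of the stratum estimator, exact form): with independent
Bernoulli(`p_i`) treatment indicators, the delta-method mean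
`(ρ_t − Cov(y_t − ρ_t x_t, x_t)/(n p_t)²) − (ρ_c − Cov(y_c − ρ_c x_c, x_c)/(n p_c)²)`
equals `(μ_t − μ_c) + (s_t/p_t − s_c/p_c)` plus the explicit remainder terms. -/
theorem delta_method_mean_stratum
    {Ω ι : Type*} [MeasurableSpace Ω] (μ : Measure Ω) [IsProbabilityMeasure μ]
    (S : Finset ι) (hS : S.Nonempty)
    (Yt Yc p : ι → ℝ) (hp : ∀ i ∈ S, p i ∈ Set.Ioo (0 : ℝ) 1)
    (W : ι → Ω → ℝ)
    (hWmeas : ∀ i, Measurable (W i))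
    (hW01 : ∀ i, ∀ ω, W i ω = 0 ∨ W i ω = 1)
    (hWp : ∀ i ∈ S, μ {ω | W i ω = 1} = ENNReal.ofReal (p i))
    (hindep : iIndepFun W μ)
    (n μt μc pt pc st sc ρt ρc : ℝ)
    (hn : n = (S.card : ℝ))
    (hμt : μt = (1 / n) * ∑ i ∈ S, Yt i)
    (hμc : μc = (1 / n) * ∑ i ∈ S, Yc i)
    (hpt : pt = (1 / n) * ∑ i ∈ S, p i)
    (hpc : pc = 1 - pt)
    (hst : st = (1 / n) * (∑ i ∈ S, Yt i * p i) - μt * pt)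
    (hsc : sc = (1 / n) * (∑ i ∈ S, Yc i * (1 - p i)) - μc * pc)
    (hρt : ρt = μt + st / pt)
    (hρc : ρc = μc + sc / pc)
    (xt yt xc yc : Ω → ℝ)
    (hxt : xt = fun ω => ∑ i ∈ S, W i ω)
    (hyt : yt = fun ω => ∑ i ∈ S, W i ω * Yt i)
    (hxc : xc = fun ω => ∑ i ∈ S, (1 - W i ω))
    (hyc : yc = fun ω => ∑ i ∈ S, (1 - W i ω) * Yc i) :
    (ρt - cov μ (fun ω => yt ω - ρt * xt ω) xt / (n * pt) ^ 2)
      - (ρc - cov μ (fun ω => yc ω - ρc * xc ω) xc / (n * pc) ^ 2)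
      = (μt - μc) + (st / pt - sc / pc)
        + (1 / (n ^ 2 * pt ^ 2)) * ∑ i ∈ S, (p i) ^ 2 * (Yt i - ρt)
        - (1 / (n ^ 2 * pc ^ 2)) * ∑ i ∈ S, (1 - p i) ^ 2 * (Yc i - ρc) :=
  delta_method_mean_stratum_general μ S hS Yt Yc p hp W hWmeas hW01 hWp hindep n μt μc pt pc st sc
    ρt ρc hn hpt hpc hst hsc hρt hρc xt yt xc yc hxt hyt hxc hyc
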